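/- arXiv:1504.07212 — 2 statements merged into one kernel-verified Lean document; each statement's English description precedes it below -/
import Mathlib

section
/- Let A be a real symmetric m×m matrix and p > 0 such that pI - A is positive definite. Define Φ_p(A) = -p²(A - pI)^{-1} - pI. Then A is negative semidefinite if and only if Φ_p(A) is negative semidefinite. -/
/-!
By the functional calculus, `Φ_p(A)` is obtained by applying the scalar map
`φ(x) = -p² (x - p)⁻¹ - p = p x / (p - x)` to the eigenvalues of `A`, all of which lie below `p`
because `pI - A` is positive definite. On `(-∞, p)` the map `φ` has the same sign as `x`, so
`A` and `Φ_p(A)` have nonpositive spectrum simultaneously.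
-/

open scoped Matrix MatrixOrder ComplexOrder

namespace Matrix

variable {n 𝕜 : Type*} [Fintype n] [DecidableEq n] [RCLike 𝕜]

lemma continuousOn_real_spectrum (A : Matrix n n 𝕜) (f : ℝ → ℝ) :
    ContinuousOn f (spectrum ℝ A) :=
  A.finite_real_spectrum.continuousOn f

lemma smul_one_sub_eq_cfc {A : Matrix n n 𝕜} (hA : A.IsHermitian) (p : ℝ) :
    p • (1 : Matrix n n 𝕜) - A = cfc (fun x : ℝ ↦ p - x) A := by
  rw [cfc_sub .., cfc_const p A hA.isSelfAdjoint, cfc_id' ℝ A hA.isSelfAdjoint,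
    Algebra.algebraMap_eq_smul_one]

lemma spectrum_lt_of_posDef_smul_one_sub {A : Matrix n n 𝕜} (hA : A.IsHermitian) {p : ℝ}
    (hpd : (p • (1 : Matrix n n 𝕜) - A).PosDef) : ∀ x ∈ spectrum ℝ A, x < p := by
  rw [smul_one_sub_eq_cfc hA] at hpd
  simpa [sub_pos] using
    (cfc_isStrictlyPositive_iff (fun x : ℝ ↦ p - x) A).mp hpd.isStrictlyPositive

lemma inv_cfc {A : Matrix n n 𝕜} (hA : A.IsHermitian) {f : ℝ → ℝ}
    (hf : ∀ x ∈ spectrum ℝ A, f x ≠ 0) :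
    (cfc f A)⁻¹ = cfc (fun x ↦ (f x)⁻¹) A := by
  rw [nonsing_inv_eq_ringInverse,
    cfc_inv f A hf (A.continuousOn_real_spectrum f) hA.isSelfAdjoint]

lemma neg_sq_smul_inv_sub_smul_one_sub_smul_one_eq_cfc {A : Matrix n n 𝕜} (hA : A.IsHermitian)
    {p : ℝ} (hp : ∀ x ∈ spectrum ℝ A, x ≠ p) :
    -(p ^ 2) • (A - p • (1 : Matrix n n 𝕜))⁻¹ - p • (1 : Matrix n n 𝕜) =
      cfc (fun x : ℝ ↦ -(p ^ 2) * (x - p)⁻¹ - p) A := by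
  have hsub : A - p • (1 : Matrix n n 𝕜) = cfc (fun x : ℝ ↦ x - p) A := by
    rw [← neg_sub, smul_one_sub_eq_cfc hA, ← cfc_neg]
    simp only [neg_sub]
  rw [hsub, inv_cfc hA fun x hx ↦ sub_ne_zero.mpr (hp x hx),
    cfc_sub _ _ A (A.continuousOn_real_spectrum _),
    cfc_const_mul _ _ A (A.continuousOn_real_spectrum _),
    cfc_const p A hA.isSelfAdjoint, Algebra.algebraMap_eq_smul_one]

lemma nonpos_iff_spectrum_nonpos {A : Matrix n n 𝕜} (hA : A.IsHermitian) :
    A ≤ 0 ↔ ∀ x ∈ spectrum ℝ A, x ≤ 0 := by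
  simpa using le_algebraMap_iff_spectrum_le (r := (0 : ℝ)) hA.isSelfAdjoint

end Matrix

lemma neg_sq_mul_inv_sub_sub_nonpos_iff {p x : ℝ} (hp : 0 < p) (hx : x < p) :
    -(p ^ 2) * (x - p)⁻¹ - p ≤ 0 ↔ x ≤ 0 := by
  have hpx : 0 < p - x := sub_pos.mpr hx
  have hformula : -(p ^ 2) * (x - p)⁻¹ - p = p * x / (p - x) := by
    rw [← neg_sub p x, inv_neg]
    field_simp
    ring
  rw [hformula, div_le_iff₀ hpx, zero_mul]
  constructor <;> intro h <;> nlinarith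

/-- For a real symmetric `m × m` matrix `A` and `p > 0` with `pI - A`
positive definite, setting `Φ_p(A) = -p² (A - pI)⁻¹ - pI`, we have
`A` negative semidefinite iff `Φ_p(A)` negative semidefinite. -/
theorem stmt0 {m : ℕ} (A : Matrix (Fin m) (Fin m) ℝ) (hA : A.IsHermitian)
    (p : ℝ) (hp : 0 < p) (hpd : (p • (1 : Matrix (Fin m) (Fin m) ℝ) - A).PosDef) :
    (-A).PosSemidef ↔
      (-(-(p ^ 2) • (A - p • (1 : Matrix (Fin m) (Fin m) ℝ))⁻¹ -
        p • (1 : Matrix (Fin m) (Fin m) ℝ))).PosSemidef := by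
  have hlt := Matrix.spectrum_lt_of_posDef_smul_one_sub hA hpd
  rw [Matrix.neg_sq_smul_inv_sub_smul_one_sub_smul_one_eq_cfc hA fun x hx ↦ (hlt x hx).ne,
    ← Matrix.nonneg_iff_posSemidef, ← Matrix.nonneg_iff_posSemidef, neg_nonneg, neg_nonneg,
    cfc_nonpos_iff _ A (A.continuousOn_real_spectrum _) hA.isSelfAdjoint,
    Matrix.nonpos_iff_spectrum_nonpos hA]
  exact forall₂_congr fun x hx ↦ (neg_sq_mul_inv_sub_sub_nonpos_iff hp (hlt x hx)).symm
end

section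
/- Let a < b be real numbers and let p(t) = P_0 + P_1(t-a) + P_2(t-a)² + P_3(t-a)³ be a cubic polynomial. If there exist 2×2 symmetric positive semidefinite matrices X = [[x,y],[y,z]] and S = [[s,v],[v,w]] such that P_0 = (b-a)s, P_1 = x - s + 2(b-a)v, P_2 = 2y - 2v + (b-a)w, P_3 = z - w, then p(t) ≥ 0 for all t ∈ [a, b]. -/
/-!
On `[a, b]` the cubic is a combination, with the nonnegative weights `t - a` and `b - t`, of the
quadratic forms of `X` and `S` evaluated at the vector `(1, t - a)`:
`p(t) = (t - a) q_X(t - a) + (b - t) q_S(t - a)`, where `q_M(u) = (1, u) M (1, u)ᵀ`.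
-/

open Matrix

lemma Matrix.PosSemidef.quadratic_nonneg_fin_two {x y z : ℝ}
    (h : (!![x, y; y, z] : Matrix (Fin 2) (Fin 2) ℝ).PosSemidef) (u : ℝ) :
    0 ≤ x + 2 * y * u + z * u ^ 2 := by
  have hq := h.dotProduct_mulVec_nonneg ![1, u]
  simp only [mulVec, dotProduct, Fin.sum_univ_two, of_apply, cons_val', cons_val_zero,
    cons_val_one, empty_val', cons_val_fin_one, star_trivial] at hq
  linarith

lemma cubic_eq_weighted_quadratics (a b t x y z s v w : ℝ) :
    (b - a) * s + (x - s + 2 * (b - a) * v) * (t - a)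
        + (2 * y - 2 * v + (b - a) * w) * (t - a) ^ 2 + (z - w) * (t - a) ^ 3 =
      (t - a) * (x + 2 * y * (t - a) + z * (t - a) ^ 2)
        + (b - t) * (s + 2 * v * (t - a) + w * (t - a) ^ 2) := by
  ring

theorem stmt14_general (a b : ℝ) (P0 P1 P2 P3 : ℝ)
    (x y z s v w : ℝ)
    (hX : (!![x, y; y, z] : Matrix (Fin 2) (Fin 2) ℝ).PosSemidef)
    (hS : (!![s, v; v, w] : Matrix (Fin 2) (Fin 2) ℝ).PosSemidef)
    (h0 : P0 = (b - a) * s)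
    (h1 : P1 = x - s + 2 * (b - a) * v)
    (h2 : P2 = 2 * y - 2 * v + (b - a) * w)
    (h3 : P3 = z - w) :
    ∀ t ∈ Set.Icc a b,
      0 ≤ P0 + P1 * (t - a) + P2 * (t - a) ^ 2 + P3 * (t - a) ^ 3 := by
  rintro t ⟨hat, htb⟩
  subst h0 h1 h2 h3
  rw [cubic_eq_weighted_quadratics]
  exact add_nonneg
    (mul_nonneg (sub_nonneg.2 hat) (hX.quadratic_nonneg_fin_two _))
    (mul_nonneg (sub_nonneg.2 htb) (hS.quadratic_nonneg_fin_two _))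

/-- If the coefficients of a cubic `p(t) = P₀ + P₁(t-a) + P₂(t-a)² + P₃(t-a)³`
can be written via two `2×2` positive semidefinite matrices
`X = [[x,y],[y,z]]`, `S = [[s,v],[v,w]]` as `P₀ = (b-a)s`, `P₁ = x - s + 2(b-a)v`,
`P₂ = 2y - 2v + (b-a)w`, `P₃ = z - w`, then `p(t) ≥ 0` on `[a,b]`. -/
theorem stmt14 (a b : ℝ) (hab : a < b) (P0 P1 P2 P3 : ℝ)
    (x y z s v w : ℝ)
    (hX : (!![x, y; y, z] : Matrix (Fin 2) (Fin 2) ℝ).PosSemidef)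
    (hS : (!![s, v; v, w] : Matrix (Fin 2) (Fin 2) ℝ).PosSemidef)
    (h0 : P0 = (b - a) * s)
    (h1 : P1 = x - s + 2 * (b - a) * v)
    (h2 : P2 = 2 * y - 2 * v + (b - a) * w)
    (h3 : P3 = z - w) :
    ∀ t ∈ Set.Icc a b,
      0 ≤ P0 + P1 * (t - a) + P2 * (t - a) ^ 2 + P3 * (t - a) ^ 3 :=
  stmt14_general a b P0 P1 P2 P3 x y z s v w hX hS h0 h1 h2 h3
end
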